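/- Let p = (v_0, v_1, …, v_l, v_{l+1}) be a simple path and let x be a {0,1} arc-selection supported on arcs (v_i, v_j) with i < j such that each intermediate node v_1,…,v_l has out-degree and in-degree at most 1 under x, node v_0 has in-degree 0, and no arc selected by x terminates at v_{l+1}. Then the total number of selected arcs Σ_{(i,j)} x_{ij} is at most l = |A_p| − 1, where |A_p| = l + 1 is the number of arcs of p. -/
import Mathlib


/-- Counting argument for the infeasible-path-elimination constraint.
Nodes of the simple path `p = (v_0, …, v_{l+1})` are identified with their
indices `0, …, l+1`. The 0/1 arc-selection `x` is supported on arcs `(i, j)`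
with `i < j ≤ l+1`; each intermediate node `1, …, l` has out-degree and
in-degree at most 1; node `0` has in-degree 0; and no selected arc terminates
at node `l+1`. Then the total number of selected arcs is at most
`l = |A_p| - 1`. -/
theorem stmt_7 (l : ℕ) (x : ℕ → ℕ → ℕ)
    (hbin : ∀ i j, x i j ≤ 1)
    (hsupp : ∀ i j, x i j = 1 → i < j ∧ j ≤ l + 1)
    (hout : ∀ k, 1 ≤ k → k ≤ l → (∑ j ∈ Finset.range (l + 2), x k j) ≤ 1)
    (hin : ∀ k, 1 ≤ k → k ≤ l → (∑ j ∈ Finset.range (l + 2), x j k) ≤ 1)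
    (hin0 : (∑ j ∈ Finset.range (l + 2), x j 0) = 0)
    (hterm : (∑ j ∈ Finset.range (l + 2), x j (l + 1)) = 0) :
    (∑ i ∈ Finset.range (l + 2), ∑ j ∈ Finset.range (l + 2), x i j) ≤ l := by
  rw [Finset.sum_comm]
  have h1 : ∀ j ∈ Finset.range (l + 2), (∑ i ∈ Finset.range (l + 2), x i j)
      ≤ if j = 0 ∨ j = l + 1 then 0 else 1 := by
    intro j hj
    rcases eq_or_ne j 0 with rfl | h0
    · simp [hin0]
    rcases eq_or_ne j (l + 1) with rfl | h1
    · simp [hterm]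
    have hj' : j ≤ l := by
      have := Finset.mem_range.mp hj; omega
    simpa [h0, h1] using hin j (Nat.one_le_iff_ne_zero.mpr h0) hj'
  calc (∑ j ∈ Finset.range (l + 2), ∑ i ∈ Finset.range (l + 2), x i j)
      ≤ ∑ j ∈ Finset.range (l + 2), if j = 0 ∨ j = l + 1 then 0 else 1 :=
        Finset.sum_le_sum h1
    _ ≤ l := by
        have : Finset.filter (fun j => ¬(j = 0 ∨ j = l + 1)) (Finset.range (l + 2))
            = Finset.Ico 1 (l + 1) := by
          ext j; simp only [Finset.mem_filter, Finset.mem_range, Finset.mem_Ico]; omega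
        rw [Finset.sum_ite, this]
        simp
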